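/- arXiv:2012.00864 — 2 statements merged into one kernel-verified Lean document; each statement's English description precedes it below -/
import Mathlib

section
/- Let R be an associative unital ring and p a prime. Let x ∈ R, and suppose there exist m ≥ 1 and k ≥ 0 such that the additive commutator map ad_x : R → R defined by ad_x(r) = x·r − r·x satisfies: (i) the m-fold iterate ad_x^m is the zero map, and (ii) p^k · (x·r − r·x) = 0 for all r ∈ R (integer scalar multiplication). Then for every natural number N ≥ k + m, the element x^{p^N} is central in R, i.e. x^{p^N}·r = r·x^{p^N} for all r ∈ R. -/
/-!
Left multiplication `L = mulLeft x` is the sum of the commuting endomorphisms `ad = L - R` and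
`R = mulRight x`, so `L ^ p ^ N` is the binomial expansion of `(ad + R) ^ p ^ N`. Its terms with
`ad ^ i`, `i ≠ 0`, vanish: for `i ≥ m` by nilpotence, and for `0 < i < m` because
`v_p (choose (p ^ N) i) = N - v_p i ≥ N - i > k` kills them by `p ^ k`-torsion. Hence
`L ^ p ^ N = R ^ p ^ N`, i.e. `x ^ p ^ N` is central.
-/

open LinearMap

theorem Nat.pow_dvd_choose_prime_pow {p k i N : ℕ} (hp : p.Prime) (hi : i ≠ 0)
    (hkiN : k + i ≤ N) : p ^ k ∣ (p ^ N).choose i := by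
  have hiN : i ≤ p ^ N := (by omega : i ≤ N).trans (Nat.lt_pow_self hp.one_lt).le
  rw [hp.pow_dvd_iff_le_factorization (Nat.choose_pos hiN).ne',
    Nat.factorization_choose_prime_pow hp hiN hi]
  have := i.factorization_lt p hi
  omega

theorem Commute.add_pow_eq_pow_right_of_choose_nsmul_eq_zero {S : Type*} [Semiring S] {d b : S}
    (h : Commute d b) {n : ℕ} (hd : ∀ i ≠ 0, n.choose i • d ^ i = 0) : (d + b) ^ n = b ^ n := by
  rw [h.add_pow', Finset.sum_eq_single (0, n)]
  · simp
  · rintro ⟨i, j⟩ hij hne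
    have hi : i ≠ 0 := by rintro rfl; simp_all
    rw [← smul_mul_assoc, hd i hi, zero_mul]
  · simp

theorem choose_prime_pow_nsmul_pow_eq_zero {S : Type*} [Semiring S] {d : S} {p k m N : ℕ}
    (hp : p.Prime) (hnil : d ^ m = 0) (htors : p ^ k • d = 0) (hN : k + m ≤ N) {i : ℕ}
    (hi : i ≠ 0) : (p ^ N).choose i • d ^ i = 0 := by
  rcases lt_or_ge i m with him | him
  · obtain ⟨c, hc⟩ := Nat.pow_dvd_choose_prime_pow hp hi (by omega : k + i ≤ N)
    obtain ⟨j, rfl⟩ := Nat.exists_eq_succ_of_ne_zero hi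
    rw [hc, mul_comm, mul_smul, pow_succ', ← smul_mul_assoc, htors, zero_mul, smul_zero]
  · rw [pow_eq_zero_of_le him hnil, smul_zero]

theorem pow_p_pow_central_general (R : Type*) [Ring R] (p : ℕ) (hp : p.Prime) (x : R)
    (m k : ℕ)
    (hnil : ∀ r : R, (fun r : R => x * r - r * x)^[m] r = 0)
    (htors : ∀ r : R, (p ^ k : ℤ) • (x * r - r * x) = 0) :
    ∀ N : ℕ, k + m ≤ N → ∀ r : R, x ^ p ^ N * r = r * x ^ p ^ N := by
  intro N hN r
  have had : ⇑(mulLeft ℤ x - mulRight ℤ x) = fun r => x * r - r * x := rfl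
  have hpow : mulLeft ℤ x ^ p ^ N = mulRight ℤ x ^ p ^ N := by
    rw [← sub_add_cancel (mulLeft ℤ x) (mulRight ℤ x)]
    refine ((commute_mulLeft_right x x).sub_left (Commute.refl _))
      |>.add_pow_eq_pow_right_of_choose_nsmul_eq_zero
      fun i hi => choose_prime_pow_nsmul_pow_eq_zero hp ?_ ?_ hN hi
    · ext r
      rw [Module.End.pow_apply, had, hnil, LinearMap.zero_apply]
    · ext r
      rw [LinearMap.smul_apply, had, ← natCast_zsmul, Nat.cast_pow, htors, LinearMap.zero_apply]
  simpa using congr($hpow r)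

/-- **Centrality of `p`-power powers.**
Let `R` be an associative unital ring and `p` a prime. Let `x ∈ R` and suppose there
are `m ≥ 1` and `k ≥ 0` such that the additive commutator map `ad_x(r) = x·r − r·x`
satisfies: (i) its `m`-fold iterate is the zero map, and (ii) `p ^ k • (x·r − r·x) = 0`
for all `r` (integer scalar multiplication). Then for every `N ≥ k + m` the element
`x ^ (p ^ N)` is central in `R`. -/
theorem pow_p_pow_central (R : Type*) [Ring R] (p : ℕ) (hp : p.Prime) (x : R)
    (m k : ℕ) (hm : 1 ≤ m)
    (hnil : ∀ r : R, (fun r : R => x * r - r * x)^[m] r = 0)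
    (htors : ∀ r : R, (p ^ k : ℤ) • (x * r - r * x) = 0) :
    ∀ N : ℕ, k + m ≤ N → ∀ r : R, x ^ p ^ N * r = r * x ^ p ^ N :=
  pow_p_pow_central_general R p hp x m k hnil htors
end

section
/- Let p be a prime, n ≥ 1 an integer, and write ℤ_(p) for the localization of ℤ at the prime ideal (p). Let A = ℤ_(p)[x_1, x_2, x_3, …] be the polynomial ring on countably many variables, graded so that x_j is homogeneous of degree 2j, and let B = ℤ_(p)[v_1, …, v_n] be the polynomial ring graded so that v_i is homogeneous of degree 2(p^i − 1). Let φ : A → B be a degree-preserving ℤ_(p)-algebra homomorphism satisfying φ(x_{p^i − 1}) = v_i for 1 ≤ i ≤ n. Then: (a) for every index j ≥ 1 not of the form p^i − 1 with 1 ≤ i ≤ n, there exists a homogeneous element g_j ∈ A of degree 2j lying in the ℤ_(p)-subalgebra generated by the variables x_{p−1}, x_{p²−1}, …, x_{p^n−1}, such that φ(x_j − g_j) = 0; and (b) the ℤ_(p)-algebra endomorphism ψ of A determined by ψ(x_{p^i−1}) = x_{p^i−1} for 1 ≤ i ≤ n and ψ(x_j) = x_j − g_j for all other indices j is a degree-preserving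 automorphism of A. -/
open MvPolynomial

/-- `ℤ_(p)`: the localization of the integers at the prime ideal `(p)`. -/
noncomputable abbrev ZpLoc (p : ℕ) (hp : p.Prime) : Type :=
  @Localization.AtPrime ℤ _ (Ideal.span {(p : ℤ)})
    ((Ideal.span_singleton_prime (by exact_mod_cast hp.ne_zero)).mpr
      (Nat.prime_iff_prime_int.mp hp))

/-- The grading on `A = ℤ_(p)[x₁, x₂, …]`: the variable `x_j` has degree `2j`. -/
def wgtA : ℕ+ → ℕ := fun j => 2 * (j : ℕ)

/-- The grading on `B = ℤ_(p)[v₁, …, v_n]`: the variable `v_i` (for `1 ≤ i ≤ n`,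
represented by `i - 1 : Fin n`) has degree `2(p^i − 1)`. -/
def wgtB (p n : ℕ) : Fin n → ℕ := fun i => 2 * (p ^ ((i : ℕ) + 1) - 1)

/-- The index `p^i − 1` (for `1 ≤ i ≤ n`, represented by `i - 1 : Fin n`) of the
variable `x_{p^i − 1}` of `A`. -/
def vIdx (p : ℕ) (hp : p.Prime) {n : ℕ} (i : Fin n) : ℕ+ :=
  ⟨p ^ ((i : ℕ) + 1) - 1, by
    have h2 : 2 ≤ p := hp.two_le
    have hle : p ≤ p ^ ((i : ℕ) + 1) := Nat.le_self_pow (Nat.succ_ne_zero _) p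
    omega⟩

/-!
Renaming `v_i` to `x_{p^i-1}` is a graded section `s` of `φ`, because `φ (x_{p^i-1}) = v_i`.
Hence `g_j := s (φ x_j)` is a polynomial in the `x_{p^i-1}` with `φ (x_j - g_j) = 0`. The
substitution `x_j ↦ x_j - g_j` is triangular: it fixes the `x_{p^i-1}`, hence every `g_j`, so
`x_j ↦ x_j + g_j` is its inverse.
-/

namespace MvPolynomial

variable {σ τ R M : Type*}

section CommSemiring

variable [CommSemiring R]

theorem IsWeightedHomogeneous.aeval [AddCommMonoid M] {w : σ → M} {w' : τ → M}
    {h : σ → MvPolynomial τ R} (hh : ∀ j, (h j).IsWeightedHomogeneous w' (w j)) {d : M}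
    {f : MvPolynomial σ R} (hf : f.IsWeightedHomogeneous w d) :
    (aeval h f).IsWeightedHomogeneous w' d := by
  induction hf using IsWeightedHomogeneous.induction_on with
  | zero => simpa using isWeightedHomogeneous_zero R w' d
  | add p q _ _ hp hq => simpa using hp.add hq
  | monomial m r hm =>
    rw [aeval_monomial, ← hm, ← zero_add (Finsupp.weight w m), Finsupp.weight_apply]
    exact (isWeightedHomogeneous_C w' r).mul
      (IsWeightedHomogeneous.prod _ _ _ fun i _ => (hh i).pow (m i))

theorem IsWeightedHomogeneous.rename [AddCommMonoid M] {w : σ → M} {e : τ → σ} {d : M}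
    {f : MvPolynomial τ R} (hf : f.IsWeightedHomogeneous (w ∘ e) d) :
    (rename e f).IsWeightedHomogeneous w d := by
  rw [rename_eq_aeval]
  exact hf.aeval fun i => isWeightedHomogeneous_X R w (e i)

theorem rename_mem_supported_range (e : τ → σ) (f : MvPolynomial τ R) :
    rename e f ∈ supported R (Set.range e) := by
  rw [supported, ← Set.range_comp, Algebra.adjoin_range_eq_range_aeval, ← rename_eq_aeval]
  exact AlgHom.mem_range_self _ f

theorem aeval_eq_self_of_mem_supported {F : σ → MvPolynomial σ R} {s : Set σ}
    (hF : ∀ k ∈ s, F k = X k) {f : MvPolynomial σ R} (hf : f ∈ supported R s) :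
    aeval F f = f := by
  refine (AlgHom.eqOn_adjoin_iff (φ := aeval F) (ψ := AlgHom.id R _)).2 ?_ hf
  rintro _ ⟨k, hk, rfl⟩
  simp [hF k hk]

end CommSemiring

variable [CommRing R]

theorem bijective_aeval_X_sub {s : Set σ} {g : σ → MvPolynomial σ R}
    (hg_zero : ∀ k ∈ s, g k = 0) (hg_mem : ∀ j, g j ∈ supported R s) :
    Function.Bijective (aeval (R := R) fun j => (X j : MvPolynomial σ R) - g j) := by
  have fixes_g {F : σ → MvPolynomial σ R} (hF : ∀ k ∈ s, F k = X k) (j : σ) :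
      aeval F (g j) = g j :=
    aeval_eq_self_of_mem_supported hF (hg_mem j)
  have fixes_g_sub := fixes_g (F := fun k => X k - g k) fun k hk => by rw [hg_zero k hk, sub_zero]
  have fixes_g_add := fixes_g (F := fun k => X k + g k) fun k hk => by rw [hg_zero k hk, add_zero]
  have sub_add : (aeval fun j => X j - g j).comp (aeval (R := R) fun j => X j + g j) =
      AlgHom.id R _ := algHom_ext fun j => by
    simp only [AlgHom.comp_apply, aeval_X, map_add, fixes_g_sub, AlgHom.id_apply, sub_add_cancel]
  have add_sub : (aeval fun j => X j + g j).comp (aeval (R := R) fun j => X j - g j) =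
      AlgHom.id R _ := algHom_ext fun j => by
    simp only [AlgHom.comp_apply, aeval_X, map_sub, fixes_g_add, AlgHom.id_apply,
      add_sub_cancel_right]
  exact (AlgEquiv.ofAlgHom _ _ sub_add add_sub).bijective

section KernelCorrection

variable (φ : MvPolynomial σ R →ₐ[R] MvPolynomial τ R) (e : τ → σ)

open Classical in
noncomputable def kernelCorrection (j : σ) : MvPolynomial σ R :=
  if j ∈ Set.range e then 0 else rename e (φ (X j))

theorem kernelCorrection_apply_self (i : τ) : kernelCorrection φ e (e i) = 0 :=
  if_pos ⟨i, rfl⟩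

theorem kernelCorrection_mem_supported (j : σ) :
    kernelCorrection φ e j ∈ supported R (Set.range e) := by
  unfold kernelCorrection
  split_ifs
  · exact Subalgebra.zero_mem _
  · exact rename_mem_supported_range e _

theorem map_X_sub_kernelCorrection (hφ : ∀ i, φ (X (e i)) = X i) {j : σ}
    (hj : j ∉ Set.range e) : φ (X j - kernelCorrection φ e j) = 0 := by
  have section_eq : φ.comp (rename e) = AlgHom.id R _ := algHom_ext fun i => by simp [hφ]
  rw [kernelCorrection, if_neg hj, map_sub, ← AlgHom.comp_apply, section_eq, AlgHom.id_apply,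
    sub_self]

theorem isWeightedHomogeneous_kernelCorrection [AddCommMonoid M] {w : σ → M} {w' : τ → M}
    (hφ : ∀ d f, f.IsWeightedHomogeneous w d → (φ f).IsWeightedHomogeneous w' d)
    (hw : w ∘ e = w') (j : σ) : (kernelCorrection φ e j).IsWeightedHomogeneous w (w j) := by
  unfold kernelCorrection
  split_ifs
  · exact isWeightedHomogeneous_zero R w _
  · exact IsWeightedHomogeneous.rename (hw ▸ hφ _ _ (isWeightedHomogeneous_X R w j))

end KernelCorrection

end MvPolynomial

theorem new_generators_for_form_general (p n : ℕ) (hp : p.Prime)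
    (φ : MvPolynomial ℕ+ (ZpLoc p hp) →ₐ[ZpLoc p hp] MvPolynomial (Fin n) (ZpLoc p hp))
    (hφdeg : ∀ (d : ℕ) (f : MvPolynomial ℕ+ (ZpLoc p hp)),
      f.IsWeightedHomogeneous wgtA d → (φ f).IsWeightedHomogeneous (wgtB p n) d)
    (hφv : ∀ i : Fin n, φ (X (vIdx p hp i)) = X i) :
    ∃ g : ℕ+ → MvPolynomial ℕ+ (ZpLoc p hp),
      (∀ i : Fin n, g (vIdx p hp i) = 0) ∧
      (∀ j : ℕ+, (¬ ∃ i : Fin n, j = vIdx p hp i) →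
        (g j).IsWeightedHomogeneous wgtA (2 * (j : ℕ)) ∧
        g j ∈ Algebra.adjoin (ZpLoc p hp)
          (Set.range fun i : Fin n => (X (vIdx p hp i) : MvPolynomial ℕ+ (ZpLoc p hp))) ∧
        φ (X j - g j) = 0) ∧
      Function.Bijective
        (aeval (R := ZpLoc p hp)
          (fun j : ℕ+ => (X j : MvPolynomial ℕ+ (ZpLoc p hp)) - g j)) ∧
      (∀ (d : ℕ) (f : MvPolynomial ℕ+ (ZpLoc p hp)),
        f.IsWeightedHomogeneous wgtA d →
        (aeval (fun j : ℕ+ => (X j : MvPolynomial ℕ+ (ZpLoc p hp)) - g j)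
          f).IsWeightedHomogeneous wgtA d) := by
  set g := kernelCorrection φ (vIdx p hp)
  have g_homogeneous (j : ℕ+) : (g j).IsWeightedHomogeneous wgtA (wgtA j) :=
    isWeightedHomogeneous_kernelCorrection φ _ hφdeg rfl j
  have g_mem (j : ℕ+) : g j ∈ supported (ZpLoc p hp) (Set.range (vIdx p hp)) :=
    kernelCorrection_mem_supported φ _ j
  refine ⟨g, kernelCorrection_apply_self φ _, fun j hj => ⟨g_homogeneous j, ?_, ?_⟩,
    bijective_aeval_X_sub (Set.forall_mem_range.2 (kernelCorrection_apply_self φ _)) g_mem,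
    fun d f hf => hf.aeval fun j => (isWeightedHomogeneous_X _ wgtA j).sub (g_homogeneous j)⟩
  · have := g_mem j
    rwa [supported, ← Set.range_comp] at this
  · exact map_X_sub_kernelCorrection φ _ hφv fun ⟨i, hi⟩ => hj ⟨i, hi.symm⟩

/-- **Change of polynomial generators adapted to a form of `BP⟨n⟩`.**
Let `A = ℤ_(p)[x₁, x₂, …]` with `x_j` of degree `2j`, and `B = ℤ_(p)[v₁, …, v_n]`
with `v_i` of degree `2(p^i − 1)`.  Let `φ : A → B` be a degree-preserving
`ℤ_(p)`-algebra homomorphism with `φ(x_{p^i − 1}) = v_i` for `1 ≤ i ≤ n`.  Then there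
is a family `g_j` (with `g_{p^i−1} = 0`) such that:

(a) for every `j` not of the form `p^i − 1` with `1 ≤ i ≤ n`, the element `g_j` is
homogeneous of degree `2j`, lies in the `ℤ_(p)`-subalgebra generated by
`x_{p−1}, …, x_{p^n−1}`, and `φ(x_j − g_j) = 0`;

(b) the `ℤ_(p)`-algebra endomorphism `ψ` of `A` with `ψ(x_j) = x_j − g_j` (so
`ψ(x_{p^i−1}) = x_{p^i−1}`) is a degree-preserving automorphism of `A`. -/
theorem new_generators_for_form (p n : ℕ) (hp : p.Prime) (hn : 1 ≤ n)
    (φ : MvPolynomial ℕ+ (ZpLoc p hp) →ₐ[ZpLoc p hp] MvPolynomial (Fin n) (ZpLoc p hp))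
    (hφdeg : ∀ (d : ℕ) (f : MvPolynomial ℕ+ (ZpLoc p hp)),
      f.IsWeightedHomogeneous wgtA d → (φ f).IsWeightedHomogeneous (wgtB p n) d)
    (hφv : ∀ i : Fin n, φ (X (vIdx p hp i)) = X i) :
    ∃ g : ℕ+ → MvPolynomial ℕ+ (ZpLoc p hp),
      (∀ i : Fin n, g (vIdx p hp i) = 0) ∧
      (∀ j : ℕ+, (¬ ∃ i : Fin n, j = vIdx p hp i) →
        (g j).IsWeightedHomogeneous wgtA (2 * (j : ℕ)) ∧
        g j ∈ Algebra.adjoin (ZpLoc p hp)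
          (Set.range fun i : Fin n => (X (vIdx p hp i) : MvPolynomial ℕ+ (ZpLoc p hp))) ∧
        φ (X j - g j) = 0) ∧
      Function.Bijective
        (aeval (R := ZpLoc p hp)
          (fun j : ℕ+ => (X j : MvPolynomial ℕ+ (ZpLoc p hp)) - g j)) ∧
      (∀ (d : ℕ) (f : MvPolynomial ℕ+ (ZpLoc p hp)),
        f.IsWeightedHomogeneous wgtA d →
        (aeval (fun j : ℕ+ => (X j : MvPolynomial ℕ+ (ZpLoc p hp)) - g j)
          f).IsWeightedHomogeneous wgtA d) :=
  new_generators_for_form_general p n hp φ hφdeg hφv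
end
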